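/- arXiv:1207.5211 — 5 statements merged into one kernel-verified Lean document; each statement's English description precedes it below -/
import Mathlib

section
/- Let V be a finite type, G a simple graph on V, s an element of ZMod 3, and w : ZMod 3 → V an injective map. Suppose there are three walks Q_0, Q_1, Q_2 in G such that for every j ∈ ZMod 3: (i) Q_j is a walk of length at least 1 from w(j) to w(j + s) whose vertices are pairwise distinct, except that its first and last vertex coincide when s = 0; (ii) no vertex w(j') (j' ∈ ZMod 3) occurs as an internal vertex of any Q_j; (iii) for j ≠ j', the walks Q_j and Q_{j'} have no common internal vertices; (iv) every vertex of V lies on some Q_j; (v) every edge of G lies on some Q_j. Then G has a Hamiltonian cycle if and only if s ≠ 0. -/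
/-- The internal vertices of a walk: its vertices other than the first and the last. -/
def SimpleGraph.Walk.interior {V : Type*} {G : SimpleGraph V} {u v : V}
    (p : G.Walk u v) : List V := p.support.tail.dropLast

/-!
If `s = 0`, each `Q j` is a closed walk and their supports are pairwise disjoint; as every edge
lies on one of them, no edge leaves the support of `Q 0`, so `w 1` is not reachable from `w 0`
and `G` has no Hamiltonian cycle. If `s ≠ 0`, then `0, s, s + s` enumerate `ZMod 3`, and
`Q 0`, `Q s`, `Q (s + s)` concatenate to a closed walk whose vertices after the first are the
disjoint union of the support tails of the three paths: every vertex, each exactly once.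
-/

namespace SimpleGraph

variable {V : Type*} {G : SimpleGraph V}

namespace Walk

variable {u v x : V}

theorem support_tail_eq_interior_append (p : G.Walk u v) (hp : ¬ p.Nil) :
    p.support.tail = p.interior ++ [v] := by
  have hne : p.support.tail ≠ [] := List.ne_nil_of_mem (end_mem_tail_support hp)
  have hlast : p.support.tail.getLast hne = v := by
    rw [List.getLast_tail, p.getLast_support]
  rw [interior]
  conv_lhs => rw [← List.dropLast_append_getLast hne, hlast]

theorem eq_or_mem_interior_of_mem_support_tail (p : G.Walk u v) (hx : x ∈ p.support.tail) :
    x = v ∨ x ∈ p.interior := by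
  have hp : ¬ p.Nil := fun h => by simp [nil_iff_support_eq.mp h] at hx
  rw [p.support_tail_eq_interior_append hp, List.mem_append, List.mem_singleton] at hx
  exact hx.symm

theorem eq_or_eq_or_mem_interior_of_mem_support (p : G.Walk u v) (hx : x ∈ p.support) :
    x = u ∨ x = v ∨ x ∈ p.interior := by
  rw [mem_support_iff] at hx
  exact hx.imp_right p.eq_or_mem_interior_of_mem_support_tail

theorem reachable_of_mem_support (p : G.Walk u v) {x y : V} (hx : x ∈ p.support)
    (hy : y ∈ p.support) : G.Reachable x y := by
  classical exact ⟨(p.takeUntil x hx).reverse.append (p.takeUntil y hy)⟩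

theorem isHamiltonianCycle_of_support_tail [DecidableEq V] {p : G.Walk u u}
    (hnodup : p.support.tail.Nodup) (hmem : ∀ x, x ∈ p.support.tail) (hlen : 3 ≤ p.length) :
    p.IsHamiltonianCycle := by
  have hp : ¬ p.Nil := not_nil_iff_lt_length.mpr (by omega)
  rw [isHamiltonianCycle_iff_isCycle_and_support_count_tail_eq_one,
    isCycle_iff_isPath_tail_and_le_length, isPath_def, support_tail_of_not_nil p hp]
  exact ⟨⟨hnodup, hlen⟩, fun x => List.count_eq_one_of_mem hnodup (hmem x)⟩

end Walk

theorem Reachable.mem_support_of_edgeSet_cover {ι : Type*} {a b : ι → V}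
    {P : ∀ i, G.Walk (a i) (b i)} (hdisj : Pairwise fun i j => (P i).support.Disjoint (P j).support)
    (hcover : ∀ e ∈ G.edgeSet, ∃ i, e ∈ (P i).edges) {i : ι} {x y : V} (hxy : G.Reachable x y)
    (hx : x ∈ (P i).support) : y ∈ (P i).support := by
  rw [reachable_iff_reflTransGen] at hxy
  induction hxy with
  | refl => exact hx
  | tail _ hyz ih =>
    obtain ⟨j, hj⟩ := hcover s(_, _) hyz
    obtain rfl : j = i := by
      by_contra hji
      exact hdisj hji ((P j).fst_mem_support_of_mem_edges hj) ih
    exact (P j).snd_mem_support_of_mem_edges hj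

section ThreeWalks

variable {s : ZMod 3} {w : ZMod 3 → V} {Q : ∀ j : ZMod 3, G.Walk (w j) (w (j + s))}

/-- `e` selects which endpoints count: the last one for support tails, either one when
`s = 0`. -/
theorem eq_of_eq_or_mem_interior (hw : Function.Injective w)
    (hterm : ∀ j j' : ZMod 3, w j' ∉ (Q j).interior)
    (hdisj : ∀ j j' : ZMod 3, j ≠ j' → ∀ x : V, x ∈ (Q j).interior → x ∉ (Q j').interior)
    {e : ZMod 3 → ZMod 3} (he : Function.Injective e) {j j' : ZMod 3} {x : V}
    (hx : x = w (e j) ∨ x ∈ (Q j).interior) (hx' : x = w (e j') ∨ x ∈ (Q j').interior) :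
    j = j' := by
  by_contra hjj'
  rcases hx with rfl | hx <;> rcases hx' with hx' | hx'
  · exact hjj' (he (hw hx'))
  · exact hterm j' _ hx'
  · exact hterm j _ (hx' ▸ hx)
  · exact hdisj j j' hjj' x hx hx'

theorem pairwise_disjoint_support_tail (hw : Function.Injective w)
    (hterm : ∀ j j' : ZMod 3, w j' ∉ (Q j).interior)
    (hdisj : ∀ j j' : ZMod 3, j ≠ j' → ∀ x : V, x ∈ (Q j).interior → x ∉ (Q j').interior) :
    Pairwise fun j j' => (Q j).support.tail.Disjoint (Q j').support.tail :=
  fun _ _ hjj' _ hx hx' => hjj' <| eq_of_eq_or_mem_interior hw hterm hdisj (add_left_injective s)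
    ((Q _).eq_or_mem_interior_of_mem_support_tail hx)
    ((Q _).eq_or_mem_interior_of_mem_support_tail hx')

theorem pairwise_disjoint_support_of_eq_zero (hw : Function.Injective w)
    (hterm : ∀ j j' : ZMod 3, w j' ∉ (Q j).interior)
    (hdisj : ∀ j j' : ZMod 3, j ≠ j' → ∀ x : V, x ∈ (Q j).interior → x ∉ (Q j').interior)
    (hs : s = 0) : Pairwise fun j j' => (Q j).support.Disjoint (Q j').support := by
  subst hs
  have hmem : ∀ {j x}, x ∈ (Q j).support → x = w j ∨ x ∈ (Q j).interior := fun hx => by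
    simpa only [add_zero, or_self_left] using (Q _).eq_or_eq_or_mem_interior_of_mem_support hx
  exact fun _ _ hjj' _ hx hx' => hjj' <|
    eq_of_eq_or_mem_interior hw hterm hdisj (e := id) Function.injective_id (hmem hx) (hmem hx')

theorem not_isHamiltonianCycle_of_eq_zero [DecidableEq V] (hw : Function.Injective w)
    (hterm : ∀ j j' : ZMod 3, w j' ∉ (Q j).interior)
    (hdisj : ∀ j j' : ZMod 3, j ≠ j' → ∀ x : V, x ∈ (Q j).interior → x ∉ (Q j').interior)
    (hedge : ∀ e ∈ G.edgeSet, ∃ j, e ∈ (Q j).edges) (hs : s = 0) {a : V} (c : G.Walk a a) :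
    ¬ c.IsHamiltonianCycle := by
  intro hc
  have hreach := c.reachable_of_mem_support (hc.mem_support (w 0)) (hc.mem_support (w 1))
  have h01 : w 1 ∈ (Q 0).support := hreach.mem_support_of_edgeSet_cover
    (pairwise_disjoint_support_of_eq_zero hw hterm hdisj hs) hedge (Q 0).start_mem_support
  rcases (Q 0).eq_or_eq_or_mem_interior_of_mem_support h01 with h | h | h
  · exact absurd (hw h) (by decide)
  · exact absurd (hw h) (by subst hs; decide)
  · exact hterm 0 1 h

variable (Q) in
def cyclicConcat : G.Walk (w 0) (w 0) :=
  ((Q 0).append ((Q (0 + s)).append (Q (0 + s + s)))).copy rfl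
    (congrArg w ((by decide : ∀ t : ZMod 3, 0 + t + t + t = 0) s))

theorem support_tail_cyclicConcat :
    (cyclicConcat Q).support.tail = [0, 0 + s, 0 + s + s].flatMap fun j => (Q j).support.tail := by
  simp only [cyclicConcat, Walk.support_copy, Walk.tail_support_append, List.flatMap_cons,
    List.flatMap_nil, List.append_nil]

theorem length_cyclicConcat :
    (cyclicConcat Q).length = (Q 0).length + (Q (0 + s)).length + (Q (0 + s + s)).length := by
  simp [cyclicConcat, add_assoc]

theorem isHamiltonianCycle_cyclicConcat [DecidableEq V] (hw : Function.Injective w)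
    (hs : s ≠ 0) (hpath : ∀ j, (Q j).IsPath) (hterm : ∀ j j' : ZMod 3, w j' ∉ (Q j).interior)
    (hdisj : ∀ j j' : ZMod 3, j ≠ j' → ∀ x : V, x ∈ (Q j).interior → x ∉ (Q j').interior)
    (hvert : ∀ x : V, ∃ j, x ∈ (Q j).support) :
    (cyclicConcat Q).IsHamiltonianCycle := by
  obtain ⟨hnodup, hall⟩ := (by decide : ∀ t : ZMod 3, t ≠ 0 →
    [0, 0 + t, 0 + t + t].Nodup ∧ ∀ j, j ∈ [0, 0 + t, 0 + t + t]) s hs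
  have hnil : ∀ j, ¬ (Q j).Nil := fun j =>
    Walk.not_nil_of_ne (hw.ne (by simpa using hs))
  have hcover : ∀ x, ∃ j, x ∈ (Q j).support.tail := fun x => by
    obtain ⟨j, hj⟩ := hvert x
    rcases (Q j).mem_support_iff.mp hj with rfl | hx
    · obtain ⟨i, rfl⟩ : ∃ i, j = i + s := ⟨j - s, (sub_add_cancel j s).symm⟩
      exact ⟨i, Walk.end_mem_tail_support (hnil i)⟩
    · exact ⟨j, hx⟩
  refine Walk.isHamiltonianCycle_of_support_tail ?_ (fun x => ?_) ?_
  · rw [support_tail_cyclicConcat, List.nodup_flatMap]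
    exact ⟨fun j _ => (hpath j).support_nodup.tail, hnodup.pairwise_of_forall_ne
      fun _ _ _ _ hne => pairwise_disjoint_support_tail hw hterm hdisj hne⟩
  · obtain ⟨j, hj⟩ := hcover x
    rw [support_tail_cyclicConcat, List.mem_flatMap]
    exact ⟨j, hall j, hj⟩
  · have := fun j => Walk.not_nil_iff_lt_length.mp (hnil j)
    rw [length_cyclicConcat]
    linarith [this 0, this (0 + s), this (0 + s + s)]

end ThreeWalks

end SimpleGraph

theorem three_paths_hamiltonian_iff_general
    {V : Type*} [DecidableEq V] (G : SimpleGraph V) (s : ZMod 3)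
    (w : ZMod 3 → V) (hw : Function.Injective w)
    (Q : ∀ j : ZMod 3, G.Walk (w j) (w (j + s)))
    -- (i) each `Q j` has length at least 1, and its vertices are pairwise distinct,
    -- except that its first and last vertex coincide when `s = 0`
    (hpath : s ≠ 0 → ∀ j, (Q j).IsPath)
    -- (ii) no `w j'` is an internal vertex of any `Q j`
    (hterm : ∀ j j' : ZMod 3, w j' ∉ (Q j).interior)
    -- (iii) distinct walks share no internal vertices
    (hdisj : ∀ j j' : ZMod 3, j ≠ j' →
      ∀ x : V, x ∈ (Q j).interior → x ∉ (Q j').interior)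
    -- (iv) every vertex lies on some `Q j`
    (hvert : ∀ x : V, ∃ j, x ∈ (Q j).support)
    -- (v) every edge lies on some `Q j`
    (hedge : ∀ e ∈ G.edgeSet, ∃ j, e ∈ (Q j).edges) :
    (∃ (a : V) (c : G.Walk a a), c.IsHamiltonianCycle) ↔ s ≠ 0 := by
  constructor
  · rintro ⟨a, c, hc⟩ hs
    exact SimpleGraph.not_isHamiltonianCycle_of_eq_zero hw hterm hdisj hedge hs c hc
  · intro hs
    exact ⟨w 0, SimpleGraph.cyclicConcat Q,
      SimpleGraph.isHamiltonianCycle_cyclicConcat hw hs (hpath hs) hterm hdisj hvert⟩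

theorem three_paths_hamiltonian_iff
    {V : Type*} [Fintype V] [DecidableEq V] (G : SimpleGraph V) (s : ZMod 3)
    (w : ZMod 3 → V) (hw : Function.Injective w)
    (Q : ∀ j : ZMod 3, G.Walk (w j) (w (j + s)))
    -- (i) each `Q j` has length at least 1, and its vertices are pairwise distinct,
    -- except that its first and last vertex coincide when `s = 0`
    (hlen : ∀ j, 1 ≤ (Q j).length)
    (hpath : s ≠ 0 → ∀ j, (Q j).IsPath)
    (hcirc : s = 0 → ∀ j, (Q j).support.tail.Nodup)
    -- (ii) no `w j'` is an internal vertex of any `Q j`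
    (hterm : ∀ j j' : ZMod 3, w j' ∉ (Q j).interior)
    -- (iii) distinct walks share no internal vertices
    (hdisj : ∀ j j' : ZMod 3, j ≠ j' →
      ∀ x : V, x ∈ (Q j).interior → x ∉ (Q j').interior)
    -- (iv) every vertex lies on some `Q j`
    (hvert : ∀ x : V, ∃ j, x ∈ (Q j).support)
    -- (v) every edge lies on some `Q j`
    (hedge : ∀ e ∈ G.edgeSet, ∃ j, e ∈ (Q j).edges) :
    (∃ (a : V) (c : G.Walk a a), c.IsHamiltonianCycle) ↔ s ≠ 0 :=
  three_paths_hamiltonian_iff_general G s w hw Q hpath hterm hdisj hvert hedge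
end

section
/- Let n ≥ 2, let V be a finite type, G a simple graph on V, v : Fin (n+1) × ZMod 3 → V an injective map (its values are called terminals), and z : Fin n → ZMod 3. Suppose that for every i ∈ Fin n and j ∈ ZMod 3 there is a path Q_{i,j} in G of length at least 1 from v(i, j) to v(i+1, j + z(i)) such that: no terminal v(i', j') occurs as an internal vertex of any Q_{i,j}; any two distinct paths Q_{i,j} and Q_{i',j'} have no common internal vertices; every vertex of V lies on some Q_{i,j}; and every edge of G lies on some Q_{i,j}. Then for every j ∈ ZMod 3 there is a path P_j in G from v(0, j) to v(n, j + Σ_{i ∈ Fin n} z(i)), and the three paths P_0, P_1, P_2 can be chosen pairwise vertex-disjoint so that together they contain every vertex of V and every edge of G. -/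
/-!
Along track `j` the `i`-th piece is `Q i (j + z 0 + ⋯ + z (i - 1))`, so consecutive pieces of a
track meet at the terminal `v (i + 1, j + z 0 + ⋯ + z i)`, and their concatenation `P j` ends at
`v (n, j + ∑ z)`. Since pieces share no interior vertices and terminals are never interior,
two pieces can only meet at a terminal; a terminal `v (i, c)` lies only on the track
`c - (z 0 + ⋯ + z (i - 1))`. Hence each track is a path and distinct tracks are disjoint, while
`(i, j) ↦ (i, j - z 0 - ⋯ - z (i - 1))` shows that every piece `Q i j` lies on some track.
-/

namespace SimpleGraph.Walk

variable {V : Type*} {G : SimpleGraph V}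

theorem mem_support_iff_eq_or_mem_interior {u w x : V} (p : G.Walk u w) :
    x ∈ p.support ↔ x = u ∨ x ∈ p.interior ∨ x = w := by
  cases p with
  | nil => simp [interior]
  | cons h q =>
    rw [interior, support_cons, List.tail_cons, List.mem_cons]
    conv_lhs => rw [← List.dropLast_append_getLast q.support_ne_nil]
    simp only [List.mem_append, List.mem_singleton, getLast_support]

@[simp]
theorem interior_copy {u w u' w' : V} (p : G.Walk u w) (hu : u = u') (hw : w = w') :
    (p.copy hu hw).interior = p.interior := by
  subst hu hw
  rfl

theorem IsPath.append {u w x : V} {p : G.Walk u w} {q : G.Walk w x} (hp : p.IsPath)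
    (hq : q.IsPath) (h : ∀ y ∈ p.support, y ∈ q.support → y = w) : (p.append q).IsPath := by
  rw [isPath_def, support_append, List.nodup_append]
  refine ⟨hp.support_nodup, hq.support_nodup.sublist q.support.tail_sublist, ?_⟩
  rintro y hy _ hy' rfl
  have hyq : y ∈ q.support := List.mem_of_mem_tail hy'
  obtain rfl := h y hy hyq
  have := hq.support_nodup
  rw [← q.cons_tail_support, List.nodup_cons] at this
  exact this.1 hy'

variable {n : ℕ} {w : Fin (n + 1) → V}

def concatFin (q : ∀ i : Fin n, G.Walk (w i.castSucc) (w i.succ)) :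
    ∀ k : Fin (n + 1), G.Walk (w 0) (w k) :=
  Fin.induction nil fun i p => p.append (q i)

variable (q : ∀ i : Fin n, G.Walk (w i.castSucc) (w i.succ))

@[simp]
theorem concatFin_zero : concatFin q 0 = nil := Fin.induction_zero ..

@[simp]
theorem concatFin_succ (i : Fin n) :
    concatFin q i.succ = (concatFin q i.castSucc).append (q i) := Fin.induction_succ ..

theorem mem_support_concatFin {x : V} (k : Fin (n + 1)) :
    x ∈ (concatFin q k).support ↔
      x = w k ∨ ∃ i : Fin n, i.castSucc < k ∧ x ∈ (q i).support := by
  induction k using Fin.induction with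
  | zero => simp
  | succ k ih =>
    simp only [concatFin_succ, mem_support_append_iff, ih, Fin.castSucc_lt_succ_iff,
      Fin.castSucc_lt_castSucc_iff]
    have hs := (q k).start_mem_support
    have he := (q k).end_mem_support
    constructor
    · rintro ((rfl | ⟨i, hi, hx⟩) | hx)
      · exact Or.inr ⟨k, le_rfl, hs⟩
      · exact Or.inr ⟨i, hi.le, hx⟩
      · exact Or.inr ⟨k, le_rfl, hx⟩
    · rintro (rfl | ⟨i, hi, hx⟩)
      · exact Or.inr he
      · rcases hi.lt_or_eq with hi | rfl
        · exact Or.inl (Or.inr ⟨i, hi, hx⟩)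
        · exact Or.inr hx

theorem mem_edges_concatFin {e : Sym2 V} (k : Fin (n + 1)) :
    e ∈ (concatFin q k).edges ↔ ∃ i : Fin n, i.castSucc < k ∧ e ∈ (q i).edges := by
  induction k using Fin.induction with
  | zero => simp
  | succ k ih =>
    simp only [concatFin_succ, edges_append, List.mem_append, ih, Fin.castSucc_lt_succ_iff,
      Fin.castSucc_lt_castSucc_iff]
    constructor
    · rintro (⟨i, hi, he⟩ | he)
      · exact ⟨i, hi.le, he⟩
      · exact ⟨k, le_rfl, he⟩
    · rintro ⟨i, hi, he⟩
      rcases hi.lt_or_eq with hi | rfl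
      · exact Or.inl ⟨i, hi, he⟩
      · exact Or.inr he

theorem isPath_concatFin (hq : ∀ i, (q i).IsPath)
    (hmeet : ∀ i i', i < i' →
      ∀ x ∈ (q i).support, x ∈ (q i').support → x = w i'.castSucc)
    (k : Fin (n + 1)) : (concatFin q k).IsPath := by
  induction k using Fin.induction with
  | zero => simp
  | succ k ih =>
    rw [concatFin_succ]
    refine ih.append (hq k) fun y hy hyk => ?_
    rcases (mem_support_concatFin q _).1 hy with rfl | ⟨i, hi, hyi⟩
    · rfl
    · exact hmeet i k (Fin.castSucc_lt_castSucc_iff.1 hi) y hyi hyk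

end SimpleGraph.Walk

theorem Fin.partialSum_last {M : Type*} [AddCommMonoid M] {n : ℕ} (f : Fin n → M) :
    Fin.partialSum f (Fin.last n) = ∑ i, f i := by
  rw [Fin.partialSum, Fin.val_last, List.take_of_length_le (List.length_ofFn ..).le,
    List.sum_ofFn]

namespace Gadget

open SimpleGraph Walk Function

variable {n : ℕ} {V A : Type*} [AddGroup A] {G : SimpleGraph V} {v : Fin (n + 1) × A → V}
  {z : Fin n → A} {Q : ∀ (i : Fin n) (j : A), G.Walk (v (i.castSucc, j)) (v (i.succ, j + z i))}

theorem eq_of_terminal_mem_support (hv : Injective v)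
    (hterm : ∀ i j p, v p ∉ (Q i j).interior) {i : Fin n} {j : A} {p : Fin (n + 1) × A}
    (h : v p ∈ (Q i j).support) : p = (i.castSucc, j) ∨ p = (i.succ, j + z i) := by
  rcases (Q i j).mem_support_iff_eq_or_mem_interior.1 h with h | h | h
  · exact Or.inl (hv h)
  · exact absurd h (hterm i j p)
  · exact Or.inr (hv h)

theorem exists_eq_terminal_of_mem_support_of_ne (hterm : ∀ i j p, v p ∉ (Q i j).interior)
    (hdisj : ∀ i j i' j', (i, j) ≠ (i', j') →
      ∀ x, x ∈ (Q i j).interior → x ∉ (Q i' j').interior)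
    {i i' : Fin n} {j j' : A} (hne : (i, j) ≠ (i', j')) {x : V} (hx : x ∈ (Q i j).support)
    (hx' : x ∈ (Q i' j').support) : ∃ p, x = v p := by
  rcases (Q i j).mem_support_iff_eq_or_mem_interior.1 hx with h | h | h
  · exact ⟨_, h⟩
  · rcases (Q i' j').mem_support_iff_eq_or_mem_interior.1 hx' with h' | h' | h'
    · exact absurd (h' ▸ h) (hterm _ _ _)
    · exact absurd h' (hdisj i j i' j' hne x h)
    · exact absurd (h' ▸ h) (hterm _ _ _)
  · exact ⟨_, h⟩

variable (Q) in
def trackPiece (j : A) (i : Fin n) :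
    G.Walk (v (i.castSucc, j + Fin.partialSum z i.castSucc))
      (v (i.succ, j + Fin.partialSum z i.succ)) :=
  (Q i _).copy rfl (by rw [Fin.partialSum_succ, add_assoc])

@[simp]
theorem support_trackPiece (j : A) (i : Fin n) :
    (trackPiece Q j i).support = (Q i (j + Fin.partialSum z i.castSucc)).support :=
  support_copy ..

@[simp]
theorem edges_trackPiece (j : A) (i : Fin n) :
    (trackPiece Q j i).edges = (Q i (j + Fin.partialSum z i.castSucc)).edges :=
  edges_copy ..

variable (Q) in
def track (j : A) (k : Fin (n + 1)) :
    G.Walk (v (0, j + Fin.partialSum z 0)) (v (k, j + Fin.partialSum z k)) :=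
  concatFin (w := fun k => v (k, j + Fin.partialSum z k)) (trackPiece Q j) k

theorem trackPiece_meet (hv : Injective v) (hterm : ∀ i j p, v p ∉ (Q i j).interior)
    (hdisj : ∀ i j i' j', (i, j) ≠ (i', j') →
      ∀ x, x ∈ (Q i j).interior → x ∉ (Q i' j').interior)
    (j : A) {i i' : Fin n} (hii' : i < i') {x : V} (hx : x ∈ (trackPiece Q j i).support)
    (hx' : x ∈ (trackPiece Q j i').support) :
    x = v (i'.castSucc, j + Fin.partialSum z i'.castSucc) := by
  rw [support_trackPiece] at hx hx'
  obtain ⟨p, rfl⟩ := exists_eq_terminal_of_mem_support_of_ne hterm hdisj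
    (by simp [hii'.ne]) hx hx'
  rcases eq_of_terminal_mem_support hv hterm hx' with rfl | rfl
  · rfl
  · rcases eq_of_terminal_mem_support hv hterm hx with h | h <;>
      simp only [Prod.ext_iff, Fin.ext_iff, Fin.val_succ, Fin.val_castSucc] at h <;>
      rw [Fin.lt_def] at hii' <;> omega

theorem isPath_track (hv : Injective v) (hpath : ∀ i j, (Q i j).IsPath)
    (hterm : ∀ i j p, v p ∉ (Q i j).interior)
    (hdisj : ∀ i j i' j', (i, j) ≠ (i', j') →
      ∀ x, x ∈ (Q i j).interior → x ∉ (Q i' j').interior)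
    (j : A) (k : Fin (n + 1)) : (track Q j k).IsPath :=
  isPath_concatFin _ (fun _ => (isPath_copy ..).2 (hpath ..))
    (fun _ _ hii' _ => trackPiece_meet hv hterm hdisj j hii') k

theorem mem_support_track_of_mem_support {i : Fin n} {j : A} {x : V} (hx : x ∈ (Q i j).support)
    {k : Fin (n + 1)} (hik : i.castSucc < k) :
    x ∈ (track Q (j - Fin.partialSum z i.castSucc) k).support :=
  (mem_support_concatFin _ k).2 (Or.inr ⟨i, hik, by rwa [support_trackPiece, sub_add_cancel]⟩)

theorem mem_edges_track_of_mem_edges {i : Fin n} {j : A} {e : Sym2 V} (he : e ∈ (Q i j).edges)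
    {k : Fin (n + 1)} (hik : i.castSucc < k) :
    e ∈ (track Q (j - Fin.partialSum z i.castSucc) k).edges :=
  (mem_edges_concatFin _ k).2 ⟨i, hik, by rwa [edges_trackPiece, sub_add_cancel]⟩

theorem mem_support_track (j : A) {k : Fin (n + 1)} {x : V}
    (hx : x ∈ (track Q j k).support) :
    (∃ a, x = v (a, j + Fin.partialSum z a)) ∨
      ∃ i, x ∈ (Q i (j + Fin.partialSum z i.castSucc)).interior := by
  rcases (mem_support_concatFin _ k).1 hx with h | ⟨i, -, hi⟩
  · exact Or.inl ⟨k, h⟩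
  · rcases (trackPiece Q j i).mem_support_iff_eq_or_mem_interior.1 hi with h | h | h
    · exact Or.inl ⟨_, h⟩
    · exact Or.inr ⟨i, by rwa [trackPiece, interior_copy] at h⟩
    · exact Or.inl ⟨_, h⟩

theorem disjoint_support_track (hv : Injective v) (hterm : ∀ i j p, v p ∉ (Q i j).interior)
    (hdisj : ∀ i j i' j', (i, j) ≠ (i', j') →
      ∀ x, x ∈ (Q i j).interior → x ∉ (Q i' j').interior)
    {j j' : A} (hjj' : j ≠ j') (k k' : Fin (n + 1)) {x : V}
    (hx : x ∈ (track Q j k).support) :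
    x ∉ (track Q j' k').support := by
  intro hx'
  rcases mem_support_track j hx with ⟨a, rfl⟩ | ⟨i, hi⟩ <;>
    rcases mem_support_track j' hx' with ⟨a', h⟩ | ⟨i', hi'⟩
  · obtain ⟨rfl, h⟩ := Prod.ext_iff.1 (hv h)
    exact hjj' (add_right_cancel h)
  · exact hterm _ _ _ hi'
  · exact hterm _ _ _ (h ▸ hi)
  · refine hdisj _ _ _ _ (fun h => hjj' ?_) x hi hi'
    obtain ⟨rfl, h⟩ := Prod.ext_iff.1 h
    exact add_right_cancel h

end Gadget

theorem gadget_paths_concatenate_general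
    {n : ℕ} {V : Type*} (G : SimpleGraph V)
    (v : Fin (n + 1) × ZMod 3 → V) (hv : Function.Injective v)
    (z : Fin n → ZMod 3)
    (Q : ∀ (i : Fin n) (j : ZMod 3), G.Walk (v (i.castSucc, j)) (v (i.succ, j + z i)))
    -- each `Q i j` is a path of length at least 1
    (hpath : ∀ i j, (Q i j).IsPath)
    -- no terminal is an internal vertex of any path
    (hterm : ∀ (i : Fin n) (j : ZMod 3) (p : Fin (n + 1) × ZMod 3), v p ∉ (Q i j).interior)
    -- distinct paths share no internal vertices
    (hdisj : ∀ (i : Fin n) (j : ZMod 3) (i' : Fin n) (j' : ZMod 3), (i, j) ≠ (i', j') →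
      ∀ x : V, x ∈ (Q i j).interior → x ∉ (Q i' j').interior)
    -- every vertex lies on some path
    (hvert : ∀ x : V, ∃ i j, x ∈ (Q i j).support)
    -- every edge lies on some path
    (hedge : ∀ e ∈ G.edgeSet, ∃ i j, e ∈ (Q i j).edges) :
    ∃ P : ∀ j : ZMod 3, G.Walk (v (0, j)) (v (Fin.last n, j + ∑ i, z i)),
      (∀ j, (P j).IsPath) ∧
      (∀ j j' : ZMod 3, j ≠ j' → ∀ x : V, x ∈ (P j).support → x ∉ (P j').support) ∧
      (∀ x : V, ∃ j, x ∈ (P j).support) ∧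
      (∀ e ∈ G.edgeSet, ∃ j, e ∈ (P j).edges) := by
  open SimpleGraph.Walk Gadget in
  refine ⟨fun j => (track Q j (Fin.last n)).copy (by rw [Fin.partialSum_zero, add_zero])
    (by rw [Fin.partialSum_last]), fun j => ?_, fun j j' hjj' x hx => ?_, fun x => ?_,
    fun e he => ?_⟩
  · rw [isPath_copy]
    exact isPath_track hv hpath hterm hdisj j _
  · rw [support_copy] at hx ⊢
    exact disjoint_support_track hv hterm hdisj hjj' _ _ hx
  · obtain ⟨i, j, hx⟩ := hvert x
    refine ⟨j - Fin.partialSum z i.castSucc, ?_⟩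
    rw [support_copy]
    exact mem_support_track_of_mem_support hx (Fin.castSucc_lt_last i)
  · obtain ⟨i, j, he⟩ := hedge e he
    refine ⟨j - Fin.partialSum z i.castSucc, ?_⟩
    rw [edges_copy]
    exact mem_edges_track_of_mem_edges he (Fin.castSucc_lt_last i)

theorem gadget_paths_concatenate
    {n : ℕ} (hn : 2 ≤ n) {V : Type*} [Fintype V] (G : SimpleGraph V)
    (v : Fin (n + 1) × ZMod 3 → V) (hv : Function.Injective v)
    (z : Fin n → ZMod 3)
    (Q : ∀ (i : Fin n) (j : ZMod 3), G.Walk (v (i.castSucc, j)) (v (i.succ, j + z i)))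
    -- each `Q i j` is a path of length at least 1
    (hpath : ∀ i j, (Q i j).IsPath)
    (hlen : ∀ i j, 1 ≤ (Q i j).length)
    -- no terminal is an internal vertex of any path
    (hterm : ∀ (i : Fin n) (j : ZMod 3) (p : Fin (n + 1) × ZMod 3), v p ∉ (Q i j).interior)
    -- distinct paths share no internal vertices
    (hdisj : ∀ (i : Fin n) (j : ZMod 3) (i' : Fin n) (j' : ZMod 3), (i, j) ≠ (i', j') →
      ∀ x : V, x ∈ (Q i j).interior → x ∉ (Q i' j').interior)
    -- every vertex lies on some path
    (hvert : ∀ x : V, ∃ i j, x ∈ (Q i j).support)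
    -- every edge lies on some path
    (hedge : ∀ e ∈ G.edgeSet, ∃ i j, e ∈ (Q i j).edges) :
    ∃ P : ∀ j : ZMod 3, G.Walk (v (0, j)) (v (Fin.last n, j + ∑ i, z i)),
      (∀ j, (P j).IsPath) ∧
      (∀ j j' : ZMod 3, j ≠ j' → ∀ x : V, x ∈ (P j).support → x ∉ (P j').support) ∧
      (∀ x : V, ∃ j, x ∈ (P j).support) ∧
      (∀ e ∈ G.edgeSet, ∃ j, e ∈ (P j).edges) :=
  gadget_paths_concatenate_general G v hv z Q hpath hterm hdisj hvert hedge
end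

section
/- Let U be a finite type with at least 3 elements and let m_C, m_D : U → U be fixed-point-free involutions (perfect matchings on U). Let G be the simple graph on U in which distinct u, u' are adjacent if and only if m_C(u) = u' or m_D(u) = u'. Let L ≥ 2 be an integer and let M be the simple graph on U × Fin L in which (u, a) and (u', a') are adjacent if and only if: u = u' and |a − a'| = 1; or a = a' = 0, u ≠ u' and m_C(u) = u'; or a = a' = L − 1, u ≠ u' and m_D(u) = u'. Then M has a Hamiltonian cycle if and only if G has a Hamiltonian cycle. -/
/-!
Both graphs turn out to be Hamiltonian exactly when `G` is connected. Write `τ = mD ∘ mC`.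
Since `G` is the union of two perfect matchings, if it is connected and has at least three
vertices then the matchings never agree, and `G` is the single alternating cycle
`u, mC u, τ u, mC (τ u), τ² u, …`, closing after twice the period of `u` under `τ`.
Conjugation by `mC` inverts `τ`, so this cycle never reaches a vertex twice.
Threading the cycle through the columns `{v} × Fin L` of `M` (down the column of `τᵏ u`, along a
`C`-edge at level `0`, up the column of `mC (τᵏ u)`, along a `D`-edge at level `L - 1`) gives a
Hamiltonian cycle of `M`. In the other direction, a Hamiltonian cycle of either graph makes it
connected, and every edge of `M` projects to an edge or a vertex of `G`.
-/

open Function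

namespace List

variable {α β : Type*}

theorem isChain_flatMap_iterate {f : α → α} {g : α → List β} {S : β → β → Prop}
    (hne : ∀ a, g a ≠ []) (hg : ∀ a, (g a).IsChain S)
    (hlink : ∀ a, ∀ x ∈ (g a).getLast?, ∀ y ∈ (g (f a)).head?, S x y) (a : α) (k : ℕ) :
    ((List.iterate f a k).flatMap g).IsChain S := by
  induction k generalizing a with
  | zero => simp
  | succ k ih =>
    rw [iterate, flatMap_cons]
    refine (hg a).append (ih (f a)) fun x hx y hy => hlink a x hx y ?_
    cases k with
    | zero => simp at hy
    | succ k => simpa [head?_append_of_ne_nil _ (hne (f a))] using hy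

end List

namespace SimpleGraph

variable {V W : Type*} {G : SimpleGraph V}

theorem Reachable.mem_of_adj_closed {S : Set V} (hS : ∀ x y, G.Adj x y → x ∈ S → y ∈ S)
    {x y : V} (h : G.Reachable x y) (hx : x ∈ S) : y ∈ S := by
  obtain ⟨p⟩ := h
  induction p with
  | nil => exact hx
  | cons hadj _ ih => exact ih (hS _ _ hadj hx)

theorem Preconnected.of_surjective_of_adj {H : SimpleGraph W} {f : W → V} (hf : Surjective f)
    (hadj : ∀ x y, H.Adj x y → f x = f y ∨ G.Adj (f x) (f y)) (hH : H.Preconnected) :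
    G.Preconnected := by
  intro u v
  obtain ⟨x, rfl⟩ := hf u
  obtain ⟨y, rfl⟩ := hf v
  rw [reachable_iff_reflTransGen]
  refine ((reachable_iff_reflTransGen x y).mp (hH x y)).lift' f fun a b hab => ?_
  show Relation.ReflTransGen G.Adj (f a) (f b)
  rcases hadj a b hab with h | h
  · rw [h]
  · exact .single h

theorem exists_isHamiltonianCycle_of_isChain [DecidableEq V] {a : V} {t : List V}
    (hchain : (a :: t ++ [a]).IsChain G.Adj) (hnodup : (a :: t).Nodup)
    (hmem : ∀ v, v ∈ a :: t) (hlen : 2 ≤ t.length) :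
    ∃ p : G.Walk a a, p.IsHamiltonianCycle := by
  let p : G.Walk a a := (Walk.ofSupport _ (by simp) hchain).copy (by simp) (by simp)
  have hsupp : p.support = a :: (t ++ [a]) :=
    (Walk.support_copy _ _ _).trans (Walk.support_ofSupport _ _)
  have hnil : ¬ p.Nil := by
    rw [Walk.nil_iff_support_eq, hsupp]
    simp
  have htail : p.tail.support = t ++ [a] := by
    rw [Walk.support_tail_of_not_nil _ hnil, hsupp, List.tail_cons]
  have htail_nodup : (t ++ [a]).Nodup := List.nodup_append_comm.mpr hnodup
  refine ⟨p, Walk.isHamiltonianCycle_isCycle_and_isHamiltonian_tail.mpr ⟨?_, fun v => ?_⟩⟩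
  · refine Walk.isCycle_iff_isPath_tail_and_le_length.mpr ⟨.mk' (htail ▸ htail_nodup), ?_⟩
    have := congrArg List.length hsupp
    simp only [Walk.length_support, List.length_cons, List.length_append] at this
    omega
  · rw [htail]
    exact List.count_eq_one_of_mem htail_nodup (by simpa [or_comm] using hmem v)

theorem exists_isHamiltonianCycle_of_flatMap_iterate [DecidableEq V] {α : Type*} {f : α → α}
    {g : α → List V} {u : α} {k : ℕ} (hk : f^[k] u = u) (hne : ∀ a, g a ≠ [])
    (hg : ∀ a, (g a).IsChain G.Adj)
    (hlink : ∀ a, ∀ x ∈ (g a).getLast?, ∀ y ∈ (g (f a)).head?, G.Adj x y)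
    (hnodup : ((List.iterate f u k).flatMap g).Nodup)
    (hmem : ∀ v, v ∈ (List.iterate f u k).flatMap g)
    (hlen : 3 ≤ ((List.iterate f u k).flatMap g).length) :
    ∃ (x : V) (p : G.Walk x x), p.IsHamiltonianCycle := by
  obtain ⟨a, t, hgu⟩ := List.exists_cons_of_ne_nil (hne u)
  obtain ⟨k, rfl⟩ : ∃ j, k = j + 1 :=
    Nat.exists_eq_add_one.mpr (Nat.pos_of_ne_zero (by rintro rfl; simp at hlen))
  set l := (List.iterate f (f u) k).flatMap g
  have hcons : (List.iterate f u (k + 1)).flatMap g = a :: (t ++ l) := by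
    simp [hgu, l]
  have hclose : (List.iterate f u (k + 1 + 1)).flatMap g = a :: (t ++ l) ++ a :: t := by
    rw [List.iterate_add, hk, List.flatMap_append, hcons]
    simp [hgu]
  rw [hcons] at hnodup hmem hlen
  refine ⟨a, exists_isHamiltonianCycle_of_isChain ?_ hnodup hmem (by simp at hlen ⊢; omega)⟩
  refine (List.isChain_flatMap_iterate hne hg hlink u (k + 1 + 1)).prefix ?_
  rw [hclose]
  exact ⟨t, by simp⟩

end SimpleGraph

namespace MatchingNetwork

variable {U : Type*} {mC mD : U → U}

theorem iterate_comp_apply_ne (hC : Involutive mC) (hD : Involutive mD)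
    (hCne : ∀ u, mC u ≠ u) (hDne : ∀ u, mD u ≠ u) (k : ℕ) (x : U) :
    (mD ∘ mC)^[k] x ≠ mC x := by
  induction k using Nat.twoStepInduction generalizing x with
  | zero => exact (hCne x).symm
  | one => exact hDne (mC x)
  | more k ih _ =>
    intro h
    apply ih ((mD ∘ mC) x)
    apply hD.injective.comp hC.injective
    have hconj : (mD ∘ mC) (mC ((mD ∘ mC) x)) = mC x := by simp [hC _, hD _]
    rw [hconj, ← h]
    exact (iterate_succ_apply' _ _ _).symm

theorem apply_ne_apply_of_preconnected [Fintype U] (hU : 3 ≤ Fintype.card U)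
    (hC : Involutive mC) (hD : Involutive mD) {G : SimpleGraph U}
    (hG : ∀ u u', G.Adj u u' → mC u = u' ∨ mD u = u') (hconn : G.Preconnected) (u : U) :
    mC u ≠ mD u := by
  classical
  intro hCD
  let S : Finset U := {u, mC u}
  have hS : ∀ x y, G.Adj x y → x ∈ S → y ∈ S := by
    intro x y hxy hx
    simp only [S, Finset.mem_insert, Finset.mem_singleton] at hx ⊢
    rcases hx with rfl | rfl <;> rcases hG _ _ hxy with rfl | rfl
    · exact Or.inr rfl
    · exact Or.inr hCD.symm
    · exact Or.inl (hC u)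
    · exact Or.inl (by rw [hCD, hD])
  have hcover : Finset.univ ⊆ S := fun v _ =>
    (hconn u v).mem_of_adj_closed (S := S) hS (by simp [S])
  have := (Finset.card_le_card hcover).trans Finset.card_le_two
  simp only [Finset.card_univ] at this
  omega

theorem two_le_minimalPeriod [Finite U] (hC : Involutive mC) (hD : Involutive mD) {u : U}
    (hCD : mC u ≠ mD u) : 2 ≤ minimalPeriod (mD ∘ mC) u := by
  have hpos : 0 < minimalPeriod (mD ∘ mC) u :=
    minimalPeriod_pos_of_mem_periodicPts ((hD.injective.comp hC.injective).mem_periodicPts u)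
  have hne : minimalPeriod (mD ∘ mC) u ≠ 1 := by
    rw [Ne, minimalPeriod_eq_one_iff_isFixedPt]
    intro hfix
    exact hCD ((hD (mC u)).symm.trans (congrArg mD hfix))
  omega

variable (mC mD) in
noncomputable def alternatingCycle (u : U) : List U :=
  (List.iterate (mD ∘ mC) u (minimalPeriod (mD ∘ mC) u)).flatMap fun x => [x, mC x]

theorem nodup_alternatingCycle (hC : Involutive mC) (hD : Involutive mD)
    (hCne : ∀ u, mC u ≠ u) (hDne : ∀ u, mD u ≠ u) (u : U) :
    (alternatingCycle mC mD u).Nodup := by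
  rw [alternatingCycle, ← List.range_map_iterate, List.nodup_flatMap]
  refine ⟨fun x _ => by simpa using (hCne x).symm, ?_⟩
  rw [List.pairwise_map]
  refine List.pairwise_lt_range.imp_of_mem fun {i j} _ hj hij => ?_
  rw [List.mem_range] at hj
  obtain ⟨d, rfl⟩ := Nat.exists_eq_add_of_lt hij
  set y := (mD ∘ mC)^[i] u
  have hji : (mD ∘ mC)^[i + d + 1] u = (mD ∘ mC)^[d + 1] y := by
    rw [← iterate_add_apply, Nat.add_comm i, Nat.add_right_comm]
  have hne : y ≠ (mD ∘ mC)^[d + 1] y := by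
    rw [← hji]
    intro h
    have := iterate_injOn_Iio_minimalPeriod (f := mD ∘ mC) (x := u) (by simp; omega)
      (by simp; omega) h
    omega
  have hodd := iterate_comp_apply_ne hC hD hCne hDne (d + 1) y
  simp only [onFun, hji, List.disjoint_cons_left, List.disjoint_cons_right, List.mem_cons,
    List.not_mem_nil, List.disjoint_nil_left, or_false, not_or, not_false_eq_true, and_true]
  exact ⟨⟨hne.symm, hodd⟩, fun h => hodd (hC.injective (h.trans (hC y).symm)),
    fun h => hne (hC.injective h).symm⟩

theorem mem_alternatingCycle [Finite U] (hC : Involutive mC) (hD : Involutive mD)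
    {G : SimpleGraph U} (hG : ∀ u u', G.Adj u u' → mC u = u' ∨ mD u = u')
    (hconn : G.Preconnected) (u v : U) : v ∈ alternatingCycle mC mD u := by
  have hpos : 0 < minimalPeriod (mD ∘ mC) u :=
    minimalPeriod_pos_of_mem_periodicPts ((hD.injective.comp hC.injective).mem_periodicPts u)
  suffices ∃ k, (mD ∘ mC)^[k] u = v ∨ mC ((mD ∘ mC)^[k] u) = v by
    obtain ⟨k, hk⟩ := this
    rw [← iterate_mod_minimalPeriod_eq] at hk
    simp only [alternatingCycle, List.mem_flatMap, List.mem_iterate, List.mem_cons,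
      List.not_mem_nil, or_false]
    exact ⟨_, ⟨_, Nat.mod_lt k hpos, rfl⟩, hk.imp Eq.symm Eq.symm⟩
  refine (hconn u v).mem_of_adj_closed
    (S := {v | ∃ k, (mD ∘ mC)^[k] u = v ∨ mC ((mD ∘ mC)^[k] u) = v}) ?_ ⟨0, Or.inl rfl⟩
  rintro x y hxy ⟨k, rfl | rfl⟩ <;> rcases hG _ _ hxy with rfl | rfl
  · exact ⟨k, Or.inr rfl⟩
  · -- step back along the orbit, going once around it first in case `k = 0`
    obtain ⟨m, hm⟩ : ∃ m, k + minimalPeriod (mD ∘ mC) u = m + 1 :=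
      Nat.exists_eq_add_one.mpr (by omega)
    refine ⟨m, Or.inr ?_⟩
    rw [← iterate_add_minimalPeriod_eq (n := k), hm, iterate_succ_apply', comp_apply, hD]
  · exact ⟨k, Or.inl (hC _).symm⟩
  · exact ⟨k + 1, Or.inl (iterate_succ_apply' _ _ _)⟩

theorem exists_isHamiltonianCycle_of_alternatingCycle [DecidableEq U] {G : SimpleGraph U}
    (hGC : ∀ u, G.Adj u (mC u)) (hGD : ∀ u, G.Adj u (mD u)) {u : U}
    (hq : 2 ≤ minimalPeriod (mD ∘ mC) u) (hnodup : (alternatingCycle mC mD u).Nodup)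
    (hmem : ∀ v, v ∈ alternatingCycle mC mD u) :
    ∃ (x : U) (p : G.Walk x x), p.IsHamiltonianCycle := by
  refine G.exists_isHamiltonianCycle_of_flatMap_iterate iterate_minimalPeriod
    (fun _ => List.cons_ne_nil _ _) (fun x => List.isChain_pair.mpr (hGC x)) ?_ hnodup hmem
    (by simp; omega)
  intro x a ha b hb
  simp only [List.getLast?_cons_cons, List.getLast?_singleton, Option.mem_def, Option.some.injEq,
    List.head?_cons] at ha hb
  subst ha hb
  exact hGD (mC x)

def column (n : ℕ) (u : U) : List (U × Fin (n + 1)) := List.ofFn fun i => (u, i)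

variable (mC) in
def snakeBlock (n : ℕ) (u : U) : List (U × Fin (n + 1)) :=
  (column n u).reverse ++ column n (mC u)

theorem flatMap_snakeBlock_perm (n : ℕ) (l : List U) :
    (l.flatMap (snakeBlock mC n)).Perm
      ((l.flatMap fun x => [x, mC x]) ×ˢ List.finRange (n + 1)) := by
  induction l with
  | nil => simp
  | cons x l ih =>
    simp only [List.flatMap_cons, snakeBlock, List.cons_append, List.nil_append,
      List.product_cons, column, List.ofFn_eq_map, List.append_assoc]
    exact ((List.reverse_perm _).append_right _).trans (.append_left _ (.append_left _ ih))

section Snake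

variable {n : ℕ} {M : SimpleGraph (U × Fin (n + 1))}

theorem isChain_column (hvert : ∀ u (i : Fin n), M.Adj (u, i.castSucc) (u, i.succ)) (u : U) :
    (column n u).IsChain M.Adj :=
  List.isChain_ofFn.mpr fun i hi => hvert u ⟨i, by omega⟩

theorem head?_column (u : U) : (column n u).head? = some (u, 0) := by
  simp [column]

theorem getLast?_column (u : U) : (column n u).getLast? = some (u, Fin.last n) := by
  rw [column, List.ofFn_succ', List.concat_eq_append, List.getLast?_concat]

theorem isChain_snakeBlock (hvert : ∀ u (i : Fin n), M.Adj (u, i.castSucc) (u, i.succ))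
    (hbot : ∀ u, M.Adj (u, 0) (mC u, 0)) (u : U) : (snakeBlock mC n u).IsChain M.Adj := by
  refine (List.isChain_reverse.mpr ((isChain_column hvert u).imp fun _ _ h => h.symm)).append
    (isChain_column hvert (mC u)) ?_
  simp only [List.getLast?_reverse, head?_column, Option.mem_def, Option.some.injEq]
  rintro _ rfl _ rfl
  exact hbot u

theorem exists_isHamiltonianCycle_snake [DecidableEq U]
    (hvert : ∀ u (i : Fin n), M.Adj (u, i.castSucc) (u, i.succ))
    (hbot : ∀ u, M.Adj (u, 0) (mC u, 0)) (htop : ∀ u, M.Adj (u, Fin.last n) (mD u, Fin.last n))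
    {u : U} (hq : 2 ≤ minimalPeriod (mD ∘ mC) u) (hnodup : (alternatingCycle mC mD u).Nodup)
    (hmem : ∀ v, v ∈ alternatingCycle mC mD u) :
    ∃ (x : U × Fin (n + 1)) (p : M.Walk x x), p.IsHamiltonianCycle := by
  have hperm := flatMap_snakeBlock_perm (mC := mC) n
    (List.iterate (mD ∘ mC) u (minimalPeriod (mD ∘ mC) u))
  refine M.exists_isHamiltonianCycle_of_flatMap_iterate iterate_minimalPeriod
    (fun _ => by simp [snakeBlock, column]) (isChain_snakeBlock hvert hbot) ?_
    (hperm.nodup_iff.mpr (hnodup.product (List.nodup_finRange _)))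
    (fun x => hperm.mem_iff.mpr (List.mem_product.mpr ⟨hmem x.1, List.mem_finRange x.2⟩))
    (by rw [hperm.length_eq, List.length_product]; simp; nlinarith)
  intro x a ha b hb
  rw [snakeBlock, List.getLast?_append_of_ne_nil _ (by simp [column]), getLast?_column] at ha
  rw [snakeBlock, List.head?_append_of_ne_nil _ (by simp [column]), List.head?_reverse,
    getLast?_column] at hb
  simp only [Option.mem_def, Option.some.injEq] at ha hb
  subst ha hb
  exact htop (mC x)

end Snake

end MatchingNetwork

open SimpleGraph MatchingNetwork

theorem matching_network_hamiltonian_iff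
    {U : Type*} [Fintype U] [DecidableEq U] (hU : 3 ≤ Fintype.card U)
    (mC mD : U → U)
    (hC : Function.Involutive mC) (hCne : ∀ u, mC u ≠ u)
    (hD : Function.Involutive mD) (hDne : ∀ u, mD u ≠ u)
    (G : SimpleGraph U)
    (hG : ∀ u u' : U, G.Adj u u' ↔ (u ≠ u' ∧ (mC u = u' ∨ mD u = u')))
    (L : ℕ) (hL : 2 ≤ L)
    (M : SimpleGraph (U × Fin L))
    (hM : ∀ (u u' : U) (a a' : Fin L), M.Adj (u, a) (u', a') ↔
      ((u = u' ∧ (a.val + 1 = a'.val ∨ a'.val + 1 = a.val)) ∨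
       (a.val = 0 ∧ a'.val = 0 ∧ u ≠ u' ∧ mC u = u') ∨
       (a.val = L - 1 ∧ a'.val = L - 1 ∧ u ≠ u' ∧ mD u = u'))) :
    (∃ (x : U × Fin L) (c : M.Walk x x), c.IsHamiltonianCycle) ↔
    (∃ (u : U) (c : G.Walk u u), c.IsHamiltonianCycle) := by
  obtain ⟨n, rfl⟩ : ∃ n, L = n + 1 := Nat.exists_eq_add_one.mpr (by omega)
  have hGC : ∀ u, G.Adj u (mC u) := fun u => (hG u _).mpr ⟨(hCne u).symm, Or.inl rfl⟩
  have hGD : ∀ u, G.Adj u (mD u) := fun u => (hG u _).mpr ⟨(hDne u).symm, Or.inr rfl⟩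
  have hGm : ∀ u u', G.Adj u u' → mC u = u' ∨ mD u = u' := fun u u' h => ((hG u u').mp h).2
  have hM_fst : ∀ x y, M.Adj x y → x.1 = y.1 ∨ G.Adj x.1 y.1 := by
    rintro ⟨u, a⟩ ⟨u', a'⟩ h
    rcases (hM _ _ _ _).mp h with ⟨rfl, -⟩ | ⟨-, -, hne, h⟩ | ⟨-, -, hne, h⟩
    exacts [Or.inl rfl, Or.inr ((hG _ _).mpr ⟨hne, Or.inl h⟩),
      Or.inr ((hG _ _).mpr ⟨hne, Or.inr h⟩)]
  suffices key : G.Preconnected → (∃ (x : U × Fin (n + 1)) (c : M.Walk x x),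
      c.IsHamiltonianCycle) ∧ ∃ (u : U) (c : G.Walk u u), c.IsHamiltonianCycle from
    ⟨fun ⟨x, c, hc⟩ => (key ((IsHamiltonian.connected fun _ => ⟨x, c, hc⟩).preconnected
      |>.of_surjective_of_adj Prod.fst_surjective hM_fst)).2,
    fun ⟨u, c, hc⟩ => (key (IsHamiltonian.connected fun _ => ⟨u, c, hc⟩).preconnected).1⟩
  intro hconn
  obtain ⟨u⟩ : Nonempty U := Fintype.card_pos_iff.mp (by omega)
  have hq := two_le_minimalPeriod hC hD (apply_ne_apply_of_preconnected hU hC hD hGm hconn u)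
  have hnodup := nodup_alternatingCycle hC hD hCne hDne u
  have hmem := mem_alternatingCycle hC hD hGm hconn u
  exact ⟨exists_isHamiltonianCycle_snake (fun v i => by simp [hM])
      (fun v => by simp [hM, (hCne v).symm]) (fun v => by simp [hM, (hDne v).symm])
      hq hnodup hmem,
    exists_isHamiltonianCycle_of_alternatingCycle hGC hGD hq hnodup hmem⟩
end

section
/- Let U be a finite type with at least 2 elements and let m_C, m_D : U → U be fixed-point-free involutions (perfect matchings on U). Let G be the simple graph on U in which distinct u, u' are adjacent if and only if m_C(u) = u' or m_D(u) = u'. Let L ≥ 2 be an integer and let M be the simple graph on U × Fin L in which (u, a) and (u', a') are adjacent if and only if: u = u' and |a − a'| = 1; or a = a' = 0, u ≠ u' and m_C(u) = u'; or a = a' = L − 1, u ≠ u' and m_D(u) = u'. Then the number of connected components of M equals the number of connected components of G. -/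
/-!
Projecting a vertex `(u, a)` of `M` to `u` and lifting `u` to `(u, 0)` induce mutually inverse
maps on connected components. Each fibre `{u} × Fin L` is a path, so every vertex is joined to its
level-0 lift; an `M`-edge projects to a `G`-edge or to a point; and a `G`-edge of type `mD` is
realised in `M` by going up the fibre to level `L - 1`, across, and back down.
-/

namespace SimpleGraph

variable {V W : Type*} {G : SimpleGraph V} {H : SimpleGraph W}

theorem Reachable.map_of_adj_reachable {f : V → W}
    (hf : ∀ ⦃v v'⦄, G.Adj v v' → H.Reachable (f v) (f v')) {v v' : V}
    (h : G.Reachable v v') : H.Reachable (f v) (f v') := by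
  rw [reachable_iff_reflTransGen] at h
  induction h with
  | refl => rfl
  | tail _ hadj ih => exact ih.trans (hf hadj)

def ConnectedComponent.equivOfReachable (f : V → W) (g : W → V)
    (hf : ∀ ⦃v v'⦄, G.Adj v v' → H.Reachable (f v) (f v'))
    (hg : ∀ ⦃w w'⦄, H.Adj w w' → G.Reachable (g w) (g w'))
    (hgf : ∀ v, G.Reachable (g (f v)) v) (hfg : ∀ w, H.Reachable (f (g w)) w) :
    G.ConnectedComponent ≃ H.ConnectedComponent where
  toFun := ConnectedComponent.lift (fun v ↦ H.connectedComponentMk (f v))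
    fun _ _ p _ ↦ ConnectedComponent.sound (p.reachable.map_of_adj_reachable hf)
  invFun := ConnectedComponent.lift (fun w ↦ G.connectedComponentMk (g w))
    fun _ _ p _ ↦ ConnectedComponent.sound (p.reachable.map_of_adj_reachable hg)
  left_inv := ConnectedComponent.ind fun v ↦ ConnectedComponent.sound (hgf v)
  right_inv := ConnectedComponent.ind fun w ↦ ConnectedComponent.sound (hfg w)

end SimpleGraph

open SimpleGraph

section MatchingNetwork

variable {U : Type*} {mC mD : U → U} {G : SimpleGraph U} {L : ℕ} {M : SimpleGraph (U × Fin L)}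

def IsMatchingNetwork (mC mD : U → U) (M : SimpleGraph (U × Fin L)) : Prop :=
  ∀ (u u' : U) (a a' : Fin L), M.Adj (u, a) (u', a') ↔
    ((u = u' ∧ (a.val + 1 = a'.val ∨ a'.val + 1 = a.val)) ∨
     (a.val = 0 ∧ a'.val = 0 ∧ u ≠ u' ∧ mC u = u') ∨
     (a.val = L - 1 ∧ a'.val = L - 1 ∧ u ≠ u' ∧ mD u = u'))

theorem IsMatchingNetwork.adj_of_pathGraph_adj (hM : IsMatchingNetwork mC mD M) (u : U)
    ⦃a a' : Fin L⦄ (h : (pathGraph L).Adj a a') : M.Adj (u, a) (u, a') :=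
  (hM _ _ _ _).2 (Or.inl ⟨rfl, pathGraph_adj.1 h⟩)

theorem reachable_of_fst_eq {V : Type*} {M : SimpleGraph (V × Fin L)}
    (hfibre : ∀ v ⦃a a' : Fin L⦄, (pathGraph L).Adj a a' → M.Adj (v, a) (v, a'))
    (v : V) (a a' : Fin L) : M.Reachable (v, a) (v, a') :=
  (pathGraph_preconnected L a a').map ⟨fun b ↦ (v, b), fun h ↦ hfibre v h⟩

theorem IsMatchingNetwork.reachable_fst_of_adj (hM : IsMatchingNetwork mC mD M)
    (hG : ∀ u u' : U, G.Adj u u' ↔ (u ≠ u' ∧ (mC u = u' ∨ mD u = u')))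
    {v w : U × Fin L} (h : M.Adj v w) : G.Reachable v.1 w.1 := by
  obtain ⟨u, a⟩ := v
  obtain ⟨u', a'⟩ := w
  rcases (hM u u' a a').1 h with ⟨rfl, -⟩ | ⟨-, -, hne, hC⟩ | ⟨-, -, hne, hD⟩
  · rfl
  · exact ((hG u u').2 ⟨hne, Or.inl hC⟩).reachable
  · exact ((hG u u').2 ⟨hne, Or.inr hD⟩).reachable

theorem IsMatchingNetwork.reachable_zero_of_adj (hM : IsMatchingNetwork mC mD M)
    (hG : ∀ u u' : U, G.Adj u u' ↔ (u ≠ u' ∧ (mC u = u' ∨ mD u = u')))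
    (hL : 0 < L) {u u' : U} (h : G.Adj u u') :
    M.Reachable (u, ⟨0, hL⟩) (u', ⟨0, hL⟩) := by
  obtain ⟨hne, hC | hD⟩ := (hG u u').1 h
  · exact ((hM _ _ _ _).2 (Or.inr (Or.inl ⟨rfl, rfl, hne, hC⟩))).reachable
  · let top : Fin L := ⟨L - 1, by omega⟩
    have across : M.Adj (u, top) (u', top) :=
      (hM _ _ _ _).2 (Or.inr (Or.inr ⟨rfl, rfl, hne, hD⟩))
    exact (reachable_of_fst_eq hM.adj_of_pathGraph_adj u _ top).trans <|
      across.reachable.trans (reachable_of_fst_eq hM.adj_of_pathGraph_adj u' top _)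

end MatchingNetwork

theorem matching_network_component_count_general
    {U : Type*}
    (mC mD : U → U)
    (G : SimpleGraph U)
    (hG : ∀ u u' : U, G.Adj u u' ↔ (u ≠ u' ∧ (mC u = u' ∨ mD u = u')))
    (L : ℕ) (hL : 2 ≤ L)
    (M : SimpleGraph (U × Fin L))
    (hM : ∀ (u u' : U) (a a' : Fin L), M.Adj (u, a) (u', a') ↔
      ((u = u' ∧ (a.val + 1 = a'.val ∨ a'.val + 1 = a.val)) ∨
       (a.val = 0 ∧ a'.val = 0 ∧ u ≠ u' ∧ mC u = u') ∨
       (a.val = L - 1 ∧ a'.val = L - 1 ∧ u ≠ u' ∧ mD u = u'))) :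
    Nat.card M.ConnectedComponent = Nat.card G.ConnectedComponent := by
  replace hM : IsMatchingNetwork mC mD M := hM
  have hL₀ : 0 < L := by omega
  exact Nat.card_congr <| ConnectedComponent.equivOfReachable Prod.fst (fun u ↦ (u, ⟨0, hL₀⟩))
    (fun _ _ ↦ hM.reachable_fst_of_adj hG) (fun _ _ ↦ hM.reachable_zero_of_adj hG hL₀)
    (fun ⟨u, a⟩ ↦ reachable_of_fst_eq hM.adj_of_pathGraph_adj u _ a) fun _ ↦ .rfl

theorem matching_network_component_count
    {U : Type*} [Fintype U] [DecidableEq U] (hU : 2 ≤ Fintype.card U)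
    (mC mD : U → U)
    (hC : Function.Involutive mC) (hCne : ∀ u, mC u ≠ u)
    (hD : Function.Involutive mD) (hDne : ∀ u, mD u ≠ u)
    (G : SimpleGraph U)
    (hG : ∀ u u' : U, G.Adj u u' ↔ (u ≠ u' ∧ (mC u = u' ∨ mD u = u')))
    (L : ℕ) (hL : 2 ≤ L)
    (M : SimpleGraph (U × Fin L))
    (hM : ∀ (u u' : U) (a a' : Fin L), M.Adj (u, a) (u', a') ↔
      ((u = u' ∧ (a.val + 1 = a'.val ∨ a'.val + 1 = a.val)) ∨
       (a.val = 0 ∧ a'.val = 0 ∧ u ≠ u' ∧ mC u = u') ∨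
       (a.val = L - 1 ∧ a'.val = L - 1 ∧ u ≠ u' ∧ mD u = u'))) :
    Nat.card M.ConnectedComponent = Nat.card G.ConnectedComponent :=
  matching_network_component_count_general mC mD G hG L hL M hM
end

section
/- For integers k ≥ 1 and Γ ≥ 1, set L = 2^k + 1 and let 𝒩 be the following simple graph. Its vertices are the path vertices p(i, a) for i ∈ Fin Γ and 0 ≤ a ≤ L − 1, together with the highway vertices h(ℓ, a) for 1 ≤ ℓ ≤ k and those 0 ≤ a ≤ L − 1 with 2^ℓ dividing a. Its edges are: p(i, a) ~ p(i, a + 1) for 0 ≤ a ≤ L − 2; h(ℓ, a) ~ h(ℓ, a + 2^ℓ) whenever both exist; h(1, a) ~ p(i, a) for every i ∈ Fin Γ and every a with 2 dividing a; and h(ℓ, a) ~ h(ℓ + 1, a) whenever both exist. Then 𝒩 has exactly Γ·(2^k + 1) + 2^k + k − 1 vertices, is connected, and has diameter at most 4k + 2. -/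
/-- Vertices of the network: path vertices `p(i, a)` for `i ∈ Fin Γ` and `0 ≤ a ≤ L - 1`
(the left summand), together with highway vertices `h(ℓ, a)` for `1 ≤ ℓ ≤ k`
(encoded by `x : Fin k` via `ℓ = x.val + 1`) and those `0 ≤ a ≤ L - 1` with `2 ^ ℓ ∣ a`
(the right summand). -/
abbrev NetV (Γ k L : ℕ) : Type :=
  (Fin Γ × Fin L) ⊕ {x : Fin k × Fin L // 2 ^ (x.1.val + 1) ∣ x.2.val}

/-- The edges of the network:
`p(i, a) ~ p(i, a + 1)`; `h(ℓ, a) ~ h(ℓ, a + 2 ^ ℓ)` whenever both exist;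
`h(1, a) ~ p(i, a)` for every `i` (the divisibility `2 ∣ a` is automatic);
and `h(ℓ, a) ~ h(ℓ + 1, a)` whenever both exist. -/
def netRel (Γ k L : ℕ) : NetV Γ k L → NetV Γ k L → Prop
  | Sum.inl (i, a), Sum.inl (i', a') => i = i' ∧ a.val + 1 = a'.val
  | Sum.inr x, Sum.inr y =>
      (x.val.1 = y.val.1 ∧ x.val.2.val + 2 ^ (x.val.1.val + 1) = y.val.2.val) ∨
      (x.val.1.val + 1 = y.val.1.val ∧ x.val.2.val = y.val.2.val)
  | Sum.inr x, Sum.inl (i, a) => x.val.1.val = 0 ∧ x.val.2.val = a.val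
  | _, _ => False

/-!
Every vertex lies within distance `2k + 1` of the hub `h(k, 0)`, so the diameter is at most
`4k + 2`. A highway vertex `h(ℓ, a)` with `ℓ < k` reaches level `ℓ + 1` in at most two steps:
directly if `2^(ℓ+1) ∣ a`, and otherwise through `h(ℓ, a - 2^ℓ)`, whose position is then divisible
by `2^(ℓ+1)`. On the top level only `h(k, 0)` and `h(k, 2^k)` exist, and they are adjacent.
A path vertex reaches level 1 in at most two steps, through its even neighbour.
Level `ℓ` carries `2^(k-ℓ) + 1` highway vertices, which gives the vertex count.
-/

open SimpleGraph

namespace SimpleGraph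

variable {V : Type*} {G : SimpleGraph V} {u v w : V}

lemma Adj.edist_le_one (h : G.Adj u v) : G.edist u v ≤ 1 :=
  edist_le_one_iff_adj_or_eq.mpr (Or.inl h)

lemma edist_le_add_of_le {m n : ℕ} (huv : G.edist u v ≤ m) (hvw : G.edist v w ≤ n) :
    G.edist u w ≤ ↑(m + n) := by
  push_cast
  exact G.edist_triangle.trans (add_le_add huv hvw)

lemma connected_and_diam_le_of_edist_le (c : V) (n : ℕ) (h : ∀ v, G.edist v c ≤ n) :
    G.Connected ∧ G.diam ≤ 2 * n := by
  have hediam : G.ediam ≤ ↑(2 * n) := by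
    push_cast
    refine (G.ediam_le_two_mul_eccent c).trans ?_
    gcongr
    exact (G.eccent_le_iff c n).mpr fun v => G.edist_comm ▸ h v
  have : Nonempty V := ⟨c⟩
  exact ⟨G.connected_of_ediam_ne_top (ne_top_of_le_ne_top (ENat.natCast_ne_top _) hediam),
    ENat.toNat_le_of_le_natCast hediam⟩

end SimpleGraph

lemma Nat.two_mul_dvd_or_two_mul_dvd_sub {d a : ℕ} (h : d ∣ a) :
    2 * d ∣ a ∨ d ≤ a ∧ 2 * d ∣ a - d := by
  obtain ⟨m, rfl⟩ := h
  obtain ⟨t, rfl | rfl⟩ := Nat.even_or_odd' m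
  · exact Or.inl ⟨t, by ring⟩
  · exact Or.inr ⟨Nat.le_mul_of_pos_right d (by omega), t, Nat.sub_eq_of_eq_add (by ring)⟩

lemma Fin.card_subtype_dvd (n d : ℕ) (hd : 0 < d) :
    Fintype.card {a : Fin (n + 1) // d ∣ a.val} = n / d + 1 := by
  rw [← Fintype.card_fin (n / d + 1)]
  refine Fintype.card_congr
    { toFun a := ⟨a.val / d, Nat.lt_succ_of_le (Nat.div_le_div_right (Nat.le_of_lt_succ a.1.2))⟩
      invFun j := ⟨⟨j * d, Nat.lt_succ_of_le ((Nat.mul_le_mul_right d (Nat.le_of_lt_succ j.2)).trans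
        (Nat.div_mul_le_self n d))⟩, Dvd.intro_left _ rfl⟩
      left_inv a := Subtype.ext (Fin.ext (Nat.div_mul_cancel a.2))
      right_inv j := Fin.ext (Nat.mul_div_cancel _ hd) }

lemma card_highway (k : ℕ) :
    Fintype.card {x : Fin k × Fin (2 ^ k + 1) // 2 ^ (x.1.val + 1) ∣ x.2.val} = 2 ^ k - 1 + k := by
  rw [Fintype.card_congr (Equiv.subtypeProdEquivSigmaSubtype
    fun (x : Fin k) (a : Fin (2 ^ k + 1)) => 2 ^ (x.val + 1) ∣ a.val), Fintype.card_sigma]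
  have hlevel (x : Fin k) : Fintype.card {a : Fin (2 ^ k + 1) // 2 ^ (x.val + 1) ∣ a.val}
      = 2 ^ (k - 1 - x.val) + 1 := by
    rw [Fin.card_subtype_dvd _ _ (by positivity), Nat.pow_div (by omega) two_pos, Nat.sub_sub,
      Nat.add_comm 1]
  simp only [hlevel, Finset.sum_add_distrib, Finset.sum_const, Finset.card_univ, Fintype.card_fin,
    smul_eq_mul, mul_one]
  rw [Fin.sum_univ_eq_sum_range (fun i => 2 ^ (k - 1 - i)),
    Finset.sum_range_reflect (fun i => 2 ^ i), Nat.geomSum_eq le_rfl]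
  simp

lemma card_netV (Γ k : ℕ) :
    Fintype.card (NetV Γ k (2 ^ k + 1)) = Γ * (2 ^ k + 1) + 2 ^ k + k - 1 := by
  rw [Fintype.card_sum, Fintype.card_prod, Fintype.card_fin, Fintype.card_fin, card_highway]
  have := Nat.one_le_two_pow (n := k)
  omega

section Network

variable {Γ k : ℕ}

abbrev network (Γ k : ℕ) : SimpleGraph (NetV Γ k (2 ^ k + 1)) :=
  fromRel (netRel Γ k (2 ^ k + 1))

lemma netRel_irrefl {L : ℕ} (v : NetV Γ k L) : ¬ netRel Γ k L v v := by
  rcases v with ⟨i, a⟩ | ⟨⟨x, a⟩, h⟩ <;> simp [netRel]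

lemma network_adj_of_netRel {u v : NetV Γ k (2 ^ k + 1)} (h : netRel Γ k (2 ^ k + 1) u v) :
    (network Γ k).Adj u v :=
  (fromRel_adj _ u v).mpr ⟨fun huv => netRel_irrefl v (huv ▸ h), Or.inl h⟩

lemma adj_path_succ (i : Fin Γ) {a b : Fin (2 ^ k + 1)} (hab : a.val + 1 = b.val) :
    (network Γ k).Adj (Sum.inl (i, a)) (Sum.inl (i, b)) :=
  network_adj_of_netRel ⟨rfl, hab⟩

lemma adj_highway_step {x : Fin k} {a b : Fin (2 ^ k + 1)} (ha : 2 ^ (x.val + 1) ∣ a.val)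
    (hb : 2 ^ (x.val + 1) ∣ b.val) (hab : a.val + 2 ^ (x.val + 1) = b.val) :
    (network Γ k).Adj (Sum.inr ⟨(x, a), ha⟩) (Sum.inr ⟨(x, b), hb⟩) :=
  network_adj_of_netRel (Or.inl ⟨rfl, hab⟩)

lemma adj_highway_succ_level {x y : Fin k} {a : Fin (2 ^ k + 1)} (hx : 2 ^ (x.val + 1) ∣ a.val)
    (hy : 2 ^ (y.val + 1) ∣ a.val) (hxy : x.val + 1 = y.val) :
    (network Γ k).Adj (Sum.inr ⟨(x, a), hx⟩) (Sum.inr ⟨(y, a), hy⟩) :=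
  network_adj_of_netRel (Or.inr ⟨hxy, rfl⟩)

lemma adj_first_level_path (i : Fin Γ) {x : Fin k} (hx : x.val = 0) {a : Fin (2 ^ k + 1)}
    (ha : 2 ^ (x.val + 1) ∣ a.val) :
    (network Γ k).Adj (Sum.inr ⟨(x, a), ha⟩) (Sum.inl (i, a)) :=
  network_adj_of_netRel ⟨hx, rfl⟩

def hub (hk : 0 < k) : NetV Γ k (2 ^ k + 1) :=
  Sum.inr ⟨(⟨k - 1, by omega⟩, 0), dvd_zero _⟩

lemma edist_top_level_hub_le (hk : 0 < k) (x : Fin k) (hx : x.val = k - 1)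
    (a : Fin (2 ^ k + 1)) (h : 2 ^ (x.val + 1) ∣ a.val) :
    (network Γ k).edist (Sum.inr ⟨(x, a), h⟩) (hub hk) ≤ 1 := by
  obtain ⟨x, hxk⟩ := x
  dsimp only at hx
  subst hx
  obtain ⟨c, hc⟩ : 2 ^ k ∣ a.val := by rwa [Nat.sub_add_cancel hk] at h
  have hc1 : c < 2 := by
    by_contra!
    have := Nat.mul_le_mul_left (2 ^ k) this
    have := a.isLt
    have := Nat.one_le_two_pow (n := k)
    omega
  interval_cases c
  · obtain rfl : a = 0 := Fin.ext (by simpa using hc)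
    exact edist_self.trans_le zero_le_one
  · refine (adj_highway_step (dvd_zero _) h ?_).symm.edist_le_one
    rw [Nat.sub_add_cancel hk, hc, mul_one, Fin.val_zero, zero_add]

lemma exists_edist_next_level_le (x : Fin k) (hx : x.val + 1 < k) (a : Fin (2 ^ k + 1))
    (h : 2 ^ (x.val + 1) ∣ a.val) :
    ∃ (b : Fin (2 ^ k + 1)) (hb : 2 ^ (x.val + 2) ∣ b.val),
      (network Γ k).edist (Sum.inr ⟨(x, a), h⟩) (Sum.inr ⟨(⟨x.val + 1, hx⟩, b), hb⟩) ≤ 2 := by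
  have hsplit := Nat.two_mul_dvd_or_two_mul_dvd_sub h
  rw [← pow_succ'] at hsplit
  rcases hsplit with hup | ⟨hle, hup⟩
  · exact ⟨a, hup, (adj_highway_succ_level h hup rfl).edist_le_one.trans (by norm_num)⟩
  · let b : Fin (2 ^ k + 1) := ⟨a.val - 2 ^ (x.val + 1), (Nat.sub_le _ _).trans_lt a.isLt⟩
    have hb : 2 ^ (x.val + 1) ∣ b.val := (pow_dvd_pow 2 (Nat.le_succ _)).trans hup
    exact ⟨b, hup, edist_le_add_of_le
      (adj_highway_step hb h (Nat.sub_add_cancel hle)).symm.edist_le_one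
      (adj_highway_succ_level hb hup rfl).edist_le_one⟩

lemma edist_highway_hub_le (hk : 0 < k) (x : Fin k) (a : Fin (2 ^ k + 1))
    (h : 2 ^ (x.val + 1) ∣ a.val) :
    (network Γ k).edist (Sum.inr ⟨(x, a), h⟩) (hub hk) ≤ ↑(2 * (k - 1 - x.val) + 1) := by
  obtain ⟨d, hd⟩ : ∃ d, k - 1 - x.val = d := ⟨_, rfl⟩
  induction d generalizing x a with
  | zero => exact (edist_top_level_hub_le hk x (by omega) a h).trans (by simp)
  | succ d ih =>
    obtain ⟨b, hb, hstep⟩ := exists_edist_next_level_le x (by omega) a h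
    exact (edist_le_add_of_le hstep (ih ⟨x.val + 1, by omega⟩ b hb (by dsimp only; omega))).trans
      (by dsimp only; norm_cast; omega)

lemma exists_edist_first_level_le (hk : 0 < k) (i : Fin Γ) (a : Fin (2 ^ k + 1)) :
    ∃ (b : Fin (2 ^ k + 1)) (hb : 2 ^ ((⟨0, hk⟩ : Fin k).val + 1) ∣ b.val),
      (network Γ k).edist (Sum.inl (i, a)) (Sum.inr ⟨(⟨0, hk⟩, b), hb⟩) ≤ 2 := by
  rcases Nat.even_or_odd' a.val with ⟨t, ht | ht⟩
  · exact ⟨a, ⟨t, ht⟩, (adj_first_level_path i rfl _).symm.edist_le_one.trans (by norm_num)⟩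
  · let b : Fin (2 ^ k + 1) := ⟨a.val - 1, by omega⟩
    have hb : 2 ^ ((⟨0, hk⟩ : Fin k).val + 1) ∣ b.val := ⟨t, by dsimp only [b]; omega⟩
    exact ⟨b, hb, edist_le_add_of_le
      (adj_path_succ i (by dsimp only [b]; omega)).symm.edist_le_one
      (adj_first_level_path i rfl hb).symm.edist_le_one⟩

lemma edist_hub_le (hk : 0 < k) (v : NetV Γ k (2 ^ k + 1)) :
    (network Γ k).edist v (hub hk) ≤ ↑(2 * k + 1) := by
  rcases v with ⟨i, a⟩ | ⟨⟨x, a⟩, h⟩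
  · obtain ⟨b, hb, hv⟩ := exists_edist_first_level_le hk i a
    exact (edist_le_add_of_le hv (edist_highway_hub_le hk _ b hb)).trans (by norm_cast; omega)
  · exact (edist_highway_hub_le hk x a h).trans (by norm_cast; omega)

end Network

theorem network_card_connected_diam_general
    (Γ k : ℕ) (hk : 1 ≤ k) (L : ℕ) (hL : L = 2 ^ k + 1)
    (N : SimpleGraph (NetV Γ k L))
    (hN : N = SimpleGraph.fromRel (netRel Γ k L)) :
    Fintype.card (NetV Γ k L) = Γ * (2 ^ k + 1) + 2 ^ k + k - 1 ∧
    N.Connected ∧ N.diam ≤ 4 * k + 2 := by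
  subst hL hN
  obtain ⟨hconn, hdiam⟩ := connected_and_diam_le_of_edist_le (hub hk) _ (edist_hub_le hk)
  exact ⟨card_netV Γ k, hconn, hdiam.trans (by omega)⟩

theorem network_card_connected_diam
    (Γ k : ℕ) (hk : 1 ≤ k) (hΓ : 1 ≤ Γ) (L : ℕ) (hL : L = 2 ^ k + 1)
    (N : SimpleGraph (NetV Γ k L))
    (hN : N = SimpleGraph.fromRel (netRel Γ k L)) :
    Fintype.card (NetV Γ k L) = Γ * (2 ^ k + 1) + 2 ^ k + k - 1 ∧
    N.Connected ∧ N.diam ≤ 4 * k + 2 :=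
  network_card_connected_diam_general Γ k hk L hL N hN
end
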